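/- arXiv:1401.3661 — 3 statements merged into one kernel-verified Lean document; each statement's English description precedes it below -/
import Mathlib

section
/- Let V be a 7-dimensional complex vector space and let a : V × V → V be an alternating bilinear map whose image spans V (equivalently, a surjective linear map A : Λ²V → V). For a linear functional p : V → ℂ let ω_p be the alternating bilinear form on V defined by ω_p(v,w) = p(a(v,w)), and let ker ω_p = {v ∈ V : ω_p(v,w) = 0 for all w ∈ V}. Define W : Hom(ℂ²,V) × V* → ℂ by W(x,p) = ω_p(x e₁, x e₂), where e₁,e₂ is the standard basis of ℂ². Assume: (i) for every p ≠ 0 the kernel of ω_p has dimension at most 3; (ii) for every p ≠ 0 with dim ker ω_p = 3, the linear map sending q ∈ V* to the restriction of ω_q to ker ω_p is surjective onto the space of alternating bilinear forms on ker ω_p. Then for every x ∈ Hom(ℂ²,V) and every p ≠ 0, the (complex Fréchet) derivative of W vanishes at (x,p) if and only if the range of x is contained in ker ω_p and the range of x has dimension at most 1. -/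
/-!
The derivative of `W` at `(x, p)` is
`(y, q) ↦ ω_p(x e₁, y e₂) + ω_p(y e₁, x e₂) + q(a(x e₁, x e₂))`, so `(x, p)` is critical
iff `x e₁, x e₂ ∈ ker ω_p` and `a(x e₁, x e₂) = 0`. An alternating form has even rank, so
`dim ker ω_p` is odd like `dim V = 7`. If `x e₁, x e₂` were independent, then
`dim ker ω_p ≥ 2`, hence `= 3` by (i), and (ii) yields `q` with `q(a(x e₁, x e₂)) = 1`.
Conversely, dependent vectors are killed by the alternating map `a`.
-/

open Module
open scoped Matrix

theorem Matrix.det_eq_zero_of_transpose_eq_neg {R n : Type*} [CommRing R] [IsAddTorsionFree R]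
    [Fintype n] [DecidableEq n] {M : Matrix n n R} (hM : Mᵀ = -M) (hn : Odd (Fintype.card n)) :
    M.det = 0 := by
  refine self_eq_neg.mp ?_
  calc M.det = Mᵀ.det := M.det_transpose.symm
    _ = -M.det := by rw [hM, Matrix.det_neg, hn.neg_one_pow, neg_one_mul]

section Algebra

variable {K V U : Type*} [Field K] [AddCommGroup V] [Module K V] [AddCommGroup U] [Module K U]

namespace LinearMap.IsAlt

variable [CharZero K] [FiniteDimensional K V] {B : V →ₗ[K] V →ₗ[K] K}

theorem even_finrank_of_separatingLeft (hB : B.IsAlt) (hsep : B.SeparatingLeft) :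
    Even (finrank K V) := by
  by_contra hodd
  let b := finBasis K V
  refine (separatingLeft_iff_det_ne_zero b).mp hsep (Matrix.det_eq_zero_of_transpose_eq_neg ?_ ?_)
  · ext i j
    simp only [Matrix.transpose_apply, Matrix.neg_apply, toMatrix₂_apply, hB.neg]
  · simpa using hodd

/-- The restriction of `B` to a complement of its kernel is nondegenerate. -/
theorem even_finrank_quotient_ker (hB : B.IsAlt) : Even (finrank K (V ⧸ LinearMap.ker B)) := by
  obtain ⟨C, hC⟩ := (LinearMap.ker B).exists_isCompl
  rw [(Submodule.quotientEquivOfIsCompl _ C hC).finrank_eq]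
  refine even_finrank_of_separatingLeft (B := B.compl₁₂ C.subtype C.subtype)
    (fun c => hB c) fun c hc => ?_
  have hcker : (c : V) ∈ LinearMap.ker B := by
    ext v
    obtain ⟨k, hk, d, hd, rfl⟩ :=
      Submodule.mem_sup.mp (hC.sup_eq_top ▸ Submodule.mem_top : v ∈ LinearMap.ker B ⊔ C)
    have hck : B c k = 0 := hB.eq_iff.mp (LinearMap.congr_fun hk c)
    simpa [hck] using hc ⟨d, hd⟩
  exact Subtype.ext ((Submodule.mem_bot K).mp (hC.inf_eq_bot ▸ ⟨hcker, c.2⟩))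

end LinearMap.IsAlt

theorem LinearMap.IsAlt.apply_eq_zero_of_not_linearIndependent {a : V →ₗ[K] V →ₗ[K] U}
    (ha : a.IsAlt) {v w : V} (h : ¬LinearIndependent K ![v, w]) : a v w = 0 := by
  simp only [LinearIndependent.pair_iff, not_forall, exists_prop, not_and_or] at h
  obtain ⟨s, t, hst, hs | ht⟩ := h
  · have hv : s • v = -t • w := by rw [neg_smul, eq_neg_iff_add_eq_zero, hst]
    refine (smul_eq_zero_iff_right hs).mp ?_
    rw [← LinearMap.smul_apply, ← map_smul, hv]
    simp [ha w]
  · have hw : t • w = -s • v := by rw [neg_smul, eq_neg_iff_add_eq_zero, add_comm, hst]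
    refine (smul_eq_zero_iff_right ht).mp ?_
    rw [← map_smul, hw]
    simp [ha v]

/-- `β = f ∧ g` for the dual pair `f, g` of `v, w`. -/
theorem exists_isAlt_apply_eq_one {v w : V} (h : LinearIndependent K ![v, w]) :
    ∃ β : V →ₗ[K] V →ₗ[K] K, β.IsAlt ∧ β v w = 1 := by
  let b := Basis.span h
  have hb (i : Fin 2) : (b i : V) = ![v, w] i := congrArg Subtype.val (Basis.span_apply h i)
  have hcoord (φ : V →ₗ[K] K) (i : Fin 2) (hφ : φ.domRestrict _ = b.coord i) (j : Fin 2) :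
      φ (![v, w] j) = if j = i then 1 else 0 := by
    rw [← hb, ← LinearMap.domRestrict_apply, hφ]
    simp [Finsupp.single_apply, eq_comm]
  obtain ⟨f, hf⟩ := LinearMap.exists_extend (b.coord 0)
  obtain ⟨g, hg⟩ := LinearMap.exists_extend (b.coord 1)
  refine ⟨f.smulRight g - g.smulRight f, fun u => by simp [mul_comm], ?_⟩
  have hfvw := hcoord f 0 hf
  have hgvw := hcoord g 1 hg
  simp_all

theorem LinearMap.apply_ne_zero_of_forall_isAlt_eq {a : V →ₗ[K] V →ₗ[K] U} {S : Submodule K V}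
    (hS : ∀ β : S →ₗ[K] S →ₗ[K] K, β.IsAlt → ∃ q : U →ₗ[K] K, ∀ v w : S, q (a v w) = β v w)
    {v w : V} (hv : v ∈ S) (hw : w ∈ S) (h : LinearIndependent K ![v, w]) : a v w ≠ 0 := by
  have hS' : LinearIndependent K ![(⟨v, hv⟩ : S), ⟨w, hw⟩] := by
    refine LinearIndependent.of_comp S.subtype ?_
    convert h using 1
    ext i
    fin_cases i <;> rfl
  obtain ⟨β, hβ, hβvw⟩ := exists_isAlt_apply_eq_one hS'
  obtain ⟨q, hq⟩ := hS β hβ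
  intro h0
  simpa [h0, hβvw] using hq ⟨v, hv⟩ ⟨w, hw⟩

/-- By parity `ker (a.compr₂ p)` has odd dimension, hence dimension 3, where `htrans` applies. -/
theorem LinearMap.apply_ne_zero_of_mem_ker_compr₂ [CharZero K] [FiniteDimensional K V]
    {a : V →ₗ[K] V →ₗ[K] U} (ha : a.IsAlt) (p : U →ₗ[K] K) (hV : Odd (finrank K V))
    (hker : finrank K (LinearMap.ker (a.compr₂ p)) ≤ 3)
    (htrans : finrank K (LinearMap.ker (a.compr₂ p)) = 3 →
      ∀ β : LinearMap.ker (a.compr₂ p) →ₗ[K] LinearMap.ker (a.compr₂ p) →ₗ[K] K, β.IsAlt →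
        ∃ q : U →ₗ[K] K, ∀ v w : LinearMap.ker (a.compr₂ p), q (a v w) = β v w)
    {v w : V} (hv : v ∈ LinearMap.ker (a.compr₂ p)) (hw : w ∈ LinearMap.ker (a.compr₂ p))
    (h : LinearIndependent K ![v, w]) : a v w ≠ 0 := by
  set S := LinearMap.ker (a.compr₂ p)
  have hquot : Even (finrank K (V ⧸ S)) :=
    LinearMap.IsAlt.even_finrank_quotient_ker (B := a.compr₂ p) fun u => by simp [ha u]
  have hsum := S.finrank_quotient_add_finrank
  have htwo : 2 ≤ finrank K S := by
    have hle : Submodule.span K (Set.range ![v, w]) ≤ S := by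
      rw [Submodule.span_le, Set.range_subset_iff, Fin.forall_fin_two]
      exact ⟨hv, hw⟩
    simpa [finrank_span_eq_card h] using Submodule.finrank_mono hle
  have hthree : finrank K S = 3 := by
    rcases hquot with ⟨k, hk⟩
    rcases hV with ⟨l, hl⟩
    omega
  exact apply_ne_zero_of_forall_isAlt_eq (htrans hthree) hv hw h

theorem LinearMap.range_eq_span_range_single {ι : Type*} [Fintype ι] [DecidableEq ι]
    (x : (ι → K) →ₗ[K] V) :
    LinearMap.range x = Submodule.span K (Set.range fun i => x (Pi.single i 1)) := by
  rw [LinearMap.range_eq_map, ← (Pi.basisFun K ι).span_eq, Submodule.map_span, ← Set.range_comp]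
  simp [Function.comp_def]

theorem finrank_span_pair_le_one_iff {v w : V} :
    finrank K (Submodule.span K (Set.range ![v, w])) ≤ 1 ↔ ¬LinearIndependent K ![v, w] := by
  rw [linearIndependent_iff_card_eq_finrank_span, Fintype.card_fin]
  have := finrank_range_le_card (R := K) ![v, w]
  simp only [Fintype.card_fin, Set.finrank] at *
  omega

end Algebra

section Derivative

theorem fderiv_apply_bilinear_eval {𝕜 E V G F : Type*} [NontriviallyNormedField 𝕜]
    [NormedAddCommGroup E] [NormedSpace 𝕜 E] [NormedAddCommGroup V] [NormedSpace 𝕜 V]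
    [NormedAddCommGroup G] [NormedSpace 𝕜 G] [NormedAddCommGroup F] [NormedSpace 𝕜 F]
    (A : V →L[𝕜] V →L[𝕜] G) (e₀ e₁ : E) (x : E →L[𝕜] V) (p : G →L[𝕜] F)
    (y : E →L[𝕜] V) (q : G →L[𝕜] F) :
    fderiv 𝕜 (fun z : (E →L[𝕜] V) × (G →L[𝕜] F) => z.2 (A (z.1 e₀) (z.1 e₁))) (x, p) (y, q) =
      p (A (x e₀) (y e₁)) + p (A (y e₀) (x e₁)) + q (A (x e₀) (x e₁)) := by
  have hev (e : E) := hasFDerivAt_fst (p := (x, p)).clm_apply (hasFDerivAt_const e (x, p))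
  have hd : HasFDerivAt (fun z : (E →L[𝕜] V) × (G →L[𝕜] F) => z.2 (A (z.1 e₀) (z.1 e₁))) _
      (x, p) :=
    hasFDerivAt_snd.clm_apply ((A.hasFDerivAt.comp (x, p) (hev e₀)).clm_apply (hev e₁))
  rw [hd.fderiv]
  simp

theorem fderiv_bilinear_eval_eq_zero_iff {𝕜 V G : Type*} [RCLike 𝕜]
    [NormedAddCommGroup V] [NormedSpace 𝕜 V] [NormedAddCommGroup G] [NormedSpace 𝕜 G]
    (A : V →L[𝕜] V →L[𝕜] G) (x : (Fin 2 → 𝕜) →L[𝕜] V) (p : G →L[𝕜] 𝕜) :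
    fderiv 𝕜 (fun z : ((Fin 2 → 𝕜) →L[𝕜] V) × (G →L[𝕜] 𝕜) =>
        z.2 (A (z.1 (Pi.single 0 1)) (z.1 (Pi.single 1 1)))) (x, p) = 0 ↔
      A (x (Pi.single 0 1)) (x (Pi.single 1 1)) = 0 ∧
        (∀ v, p (A (x (Pi.single 0 1)) v) = 0) ∧ ∀ v, p (A v (x (Pi.single 1 1))) = 0 := by
  simp only [ContinuousLinearMap.ext_iff, Prod.forall, fderiv_apply_bilinear_eval, zero_apply]
  constructor
  · intro h
    refine ⟨SeparatingDual.eq_zero_of_forall_dual_eq_zero fun q => by simpa using h 0 q,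
      fun v => ?_, fun v => ?_⟩
    · simpa using h ((ContinuousLinearMap.proj 1).smulRight v) 0
    · simpa using h ((ContinuousLinearMap.proj 0).smulRight v) 0
  · rintro ⟨hA, h₀, h₁⟩ y q
    simp [hA, h₀, h₁]

end Derivative

theorem critical_locus_of_superpotential_general
    {V : Type*} [NormedAddCommGroup V] [NormedSpace ℂ V] [FiniteDimensional ℂ V]
    (hV : finrank ℂ V = 7)
    (a : V →ₗ[ℂ] V →ₗ[ℂ] V)
    (halt : ∀ v : V, a v v = 0)
    -- (i) for every `p ≠ 0` the kernel of `ω_p` has dimension at most 3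
    (hker3 : ∀ p : V →ₗ[ℂ] ℂ, p ≠ 0 →
      finrank ℂ (LinearMap.ker (a.compr₂ p)) ≤ 3)
    -- (ii) where `dim ker ω_p = 3`, the map `q ↦ ω_q |_{ker ω_p}` is surjective onto
    -- alternating bilinear forms on `ker ω_p`
    (htrans : ∀ p : V →ₗ[ℂ] ℂ, p ≠ 0 →
      finrank ℂ (LinearMap.ker (a.compr₂ p)) = 3 →
      ∀ β : (LinearMap.ker (a.compr₂ p)) →ₗ[ℂ] (LinearMap.ker (a.compr₂ p)) →ₗ[ℂ] ℂ,
        (∀ v, β v v = 0) →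
        ∃ q : V →ₗ[ℂ] ℂ, ∀ v w : LinearMap.ker (a.compr₂ p),
          q (a v w) = β v w)
    (W : ((Fin 2 → ℂ) →L[ℂ] V) × (V →L[ℂ] ℂ) → ℂ)
    (hW : ∀ (x : (Fin 2 → ℂ) →L[ℂ] V) (p : V →L[ℂ] ℂ),
      W (x, p) = p (a (x (Pi.single 0 1)) (x (Pi.single 1 1))))
    (x : (Fin 2 → ℂ) →L[ℂ] V) (p : V →L[ℂ] ℂ) (hp : p ≠ 0) :
    fderiv ℂ W (x, p) = 0 ↔
      (LinearMap.range x.toLinearMap ≤ LinearMap.ker (a.compr₂ p.toLinearMap) ∧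
        finrank ℂ (LinearMap.range x.toLinearMap) ≤ 1) := by
  have hp' : p.toLinearMap ≠ 0 := fun h => hp (ContinuousLinearMap.coe_injective h)
  have hω : (a.compr₂ p.toLinearMap).IsAlt := fun v => by simp [halt v]
  have hmem (u : V) : u ∈ LinearMap.ker (a.compr₂ p.toLinearMap) ↔ ∀ v, p (a u v) = 0 := by
    simp [LinearMap.ext_iff]
  have hmem' (u : V) : u ∈ LinearMap.ker (a.compr₂ p.toLinearMap) ↔ ∀ v, p (a v u) = 0 := by
    simpa using (hmem u).trans (forall_congr' fun v => hω.eq_iff)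
  have hW' : W = fun z => z.2 (a.toContinuousBilinearMap (z.1 (Pi.single 0 1))
      (z.1 (Pi.single 1 1))) := funext fun z => hW z.1 z.2
  have hpair : (fun i : Fin 2 => x.toLinearMap (Pi.single i 1)) =
      ![x (Pi.single 0 1), x (Pi.single 1 1)] := by
    ext i; fin_cases i <;> rfl
  rw [hW', fderiv_bilinear_eval_eq_zero_iff, LinearMap.range_eq_span_range_single, hpair,
    Submodule.span_le, Set.range_subset_iff, Fin.forall_fin_two, finrank_span_pair_le_one_iff]
  simp only [LinearMap.toContinuousBilinearMap_apply, ← hmem, ← hmem', Matrix.cons_val_zero,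
    Matrix.cons_val_one, SetLike.mem_coe]
  constructor
  · rintro ⟨hA, h₀, h₁⟩
    exact ⟨⟨h₀, h₁⟩, fun hli => LinearMap.apply_ne_zero_of_mem_ker_compr₂ halt p.toLinearMap
      (by rw [hV]; decide) (hker3 _ hp') (htrans _ hp') h₀ h₁ hli hA⟩
  · rintro ⟨⟨h₀, h₁⟩, hdep⟩
    exact ⟨LinearMap.IsAlt.apply_eq_zero_of_not_linearIndependent halt hdep, h₀, h₁⟩

/-- **Critical locus of the Hori–Tong superpotential** (Proposition 5.2).
`V` is a 7-dimensional complex vector space, `a : Λ²V → V` is (the bilinear avatar of)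
a surjective linear map, `ω_p = p ∘ a` and `W (x, p) = ω_p (x e₁, x e₂)`.  Under the
genericity assumptions (i) and (ii), the derivative of `W` vanishes at `(x, p)` with
`p ≠ 0` if and only if `Im x ⊆ ker ω_p` and `rk x ≤ 1`. -/
theorem critical_locus_of_superpotential
    {V : Type*} [NormedAddCommGroup V] [NormedSpace ℂ V] [FiniteDimensional ℂ V]
    (hV : finrank ℂ V = 7)
    (a : V →ₗ[ℂ] V →ₗ[ℂ] V)
    (halt : ∀ v : V, a v v = 0)
    (hspan : Submodule.span ℂ {v : V | ∃ x y : V, a x y = v} = ⊤)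
    -- (i) for every `p ≠ 0` the kernel of `ω_p` has dimension at most 3
    (hker3 : ∀ p : V →ₗ[ℂ] ℂ, p ≠ 0 →
      finrank ℂ (LinearMap.ker (a.compr₂ p)) ≤ 3)
    -- (ii) where `dim ker ω_p = 3`, the map `q ↦ ω_q |_{ker ω_p}` is surjective onto
    -- alternating bilinear forms on `ker ω_p`
    (htrans : ∀ p : V →ₗ[ℂ] ℂ, p ≠ 0 →
      finrank ℂ (LinearMap.ker (a.compr₂ p)) = 3 →
      ∀ β : (LinearMap.ker (a.compr₂ p)) →ₗ[ℂ] (LinearMap.ker (a.compr₂ p)) →ₗ[ℂ] ℂ,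
        (∀ v, β v v = 0) →
        ∃ q : V →ₗ[ℂ] ℂ, ∀ v w : LinearMap.ker (a.compr₂ p),
          q (a v w) = β v w)
    (W : ((Fin 2 → ℂ) →L[ℂ] V) × (V →L[ℂ] ℂ) → ℂ)
    (hW : ∀ (x : (Fin 2 → ℂ) →L[ℂ] V) (p : V →L[ℂ] ℂ),
      W (x, p) = p (a (x (Pi.single 0 1)) (x (Pi.single 1 1))))
    (x : (Fin 2 → ℂ) →L[ℂ] V) (p : V →L[ℂ] ℂ) (hp : p ≠ 0) :
    fderiv ℂ W (x, p) = 0 ↔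
      (LinearMap.range x.toLinearMap ≤ LinearMap.ker (a.compr₂ p.toLinearMap) ∧
        finrank ℂ (LinearMap.range x.toLinearMap) ≤ 1) :=
  critical_locus_of_superpotential_general hV a halt hker3 htrans W hW x p hp
end

section
/- Let f : Matrix (Fin 3) (Fin 2) ℂ → ℂ be a polynomial function (the evaluation of a multivariate polynomial in the 6 matrix entries) which is invariant under the right action of SL(2,ℂ): f(m · g) = f(m) for every 3×2 complex matrix m and every g ∈ SL(2,ℂ) (with m · g the matrix product). Then there exists a polynomial P in 3 variables with complex coefficients such that f(m) = P(δ₀(m), δ₁(m), δ₂(m)) for all m, where δ₀(m) = m₁₀m₂₁ − m₁₁m₂₀, δ₁(m) = m₀₀m₂₁ − m₀₁m₂₀, δ₂(m) = m₀₀m₁₁ − m₀₁m₁₀ are the three 2×2 minors of m. -/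
/-!
On the open set `{δ₀ ≠ 0}` every `3 × 2` matrix can be moved by `SL₂` to a normal form whose
entries are polynomials in the minors and `δ₀⁻¹`, so `δ₀ ^ N * f` is a polynomial `Q₀` in the
minors there; likewise `δ₂ ^ N' * f = Q₂` on `{δ₂ ≠ 0}`. Comparing the two on the overlap gives
`Q₀ X₂ ^ N' = Q₂ X₀ ^ N`, and since `X₀` is prime, `X₀ ^ N ∣ Q₀`. The quotient `P` satisfies
`f = P(δ)` wherever `δ₀ ≠ 0`, hence everywhere by Zariski density.
-/

open MvPolynomial

namespace MvPolynomial

section Domain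

variable {R σ : Type*} [CommRing R] [IsDomain R]

theorem eq_of_eval_eq_of_eval_ne_zero [Infinite R] {p q r : MvPolynomial σ R} (hr : r ≠ 0)
    (h : ∀ x, eval x r ≠ 0 → eval x p = eval x q) : p = q :=
  mul_right_cancel₀ hr <| MvPolynomial.funext fun x => by
    by_cases hx : eval x r = 0
    · simp [hx]
    · simp [h x hx]

theorem X_pow_dvd_of_X_pow_dvd_mul_X_pow {i j : σ} (hij : i ≠ j) {p : MvPolynomial σ R}
    {n k : ℕ} (h : X i ^ n ∣ p * X j ^ k) : X i ^ n ∣ p :=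
  (X_prime (R := R)).pow_dvd_of_dvd_mul_right n
    (fun hd => hij (X_dvd_X.mp ((X_prime (R := R)).dvd_of_dvd_pow hd))) h

end Domain

variable {K σ ι : Type*} [Field K]

/-- The polynomial variable stands for `(d i)⁻¹`; `Polynomial.reflect` clears the denominators. -/
theorem exists_pow_mul_eval_eval₂_inv_eq_eval (F : MvPolynomial ι K)
    (s : ι → Polynomial (MvPolynomial σ K)) (i : σ) :
    ∃ (N : ℕ) (Q : MvPolynomial σ K), ∀ d : σ → K, d i ≠ 0 →
      d i ^ N * eval (fun j => (s j).eval₂ (eval d) (d i)⁻¹) F = eval d Q := by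
  generalize hG : aeval s F = G
  refine ⟨G.natDegree, (G.reflect G.natDegree).eval (X i), fun d hd => ?_⟩
  have hev : eval (fun j => (s j).eval₂ (eval d) (d i)⁻¹) F = G.eval₂ (eval d) (d i)⁻¹ := by
    rw [← Polynomial.coe_eval₂RingHom, ← hG, aeval_def, eval₂_comp_left]
    have hK : (Polynomial.eval₂RingHom (eval d) (d i)⁻¹).comp (algebraMap K _) = RingHom.id K :=
      RingHom.ext fun c => by simp [Polynomial.algebraMap_apply]
    rw [hK]
    rfl
  let := invertibleOfNonzero (inv_ne_zero hd)
  have hrefl := Polynomial.eval₂_reflect_mul_pow (eval d) (d i)⁻¹ _ G le_rfl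
  rw [invOf_eq_inv, inv_inv, inv_pow] at hrefl
  rw [hev, ← hrefl, mul_left_comm, mul_inv_cancel₀ (pow_ne_zero _ hd), mul_one,
    ← Polynomial.eval₂_hom, eval_X]

end MvPolynomial

namespace Matrix

variable {R S K : Type*} [CommRing R] [CommRing S] [Field K]

def minors (m : Matrix (Fin 3) (Fin 2) R) : Fin 3 → R :=
  ![m 1 0 * m 2 1 - m 1 1 * m 2 0,
    m 0 0 * m 2 1 - m 0 1 * m 2 0,
    m 0 0 * m 1 1 - m 0 1 * m 1 0]

theorem minors_map (φ : R →+* S) (m : Matrix (Fin 3) (Fin 2) R) :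
    minors (m.map φ) = φ ∘ minors m := by
  ext k
  fin_cases k <;> simp [minors]

/-- With `u = (d 0)⁻¹`, a normal form for the `SL₂`-orbits in `{δ₀ ≠ 0}` with minors `d`;
`chart₂` is the analogue on `{δ₂ ≠ 0}`. -/
def chart₀ (u : R) (d : Fin 3 → R) : Matrix (Fin 3) (Fin 2) R :=
  !![d 1, -(d 2 * u); d 0, 0; 0, 1]

def chart₂ (u : R) (d : Fin 3 → R) : Matrix (Fin 3) (Fin 2) R :=
  !![d 2, 0; 0, 1; -d 0, d 1 * u]

theorem chart₀_map (φ : R →+* S) (u : R) (d : Fin 3 → R) :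
    (chart₀ u d).map φ = chart₀ (φ u) (φ ∘ d) := by
  ext i j
  fin_cases i <;> fin_cases j <;> simp [chart₀]

theorem chart₂_map (φ : R →+* S) (u : R) (d : Fin 3 → R) :
    (chart₂ u d).map φ = chart₂ (φ u) (φ ∘ d) := by
  ext i j
  fin_cases i <;> fin_cases j <;> simp [chart₂]

theorem minors_chart₀ {u : R} {d : Fin 3 → R} (hu : d 0 * u = 1) : minors (chart₀ u d) = d := by
  ext k
  fin_cases k <;> simp [minors, chart₀]
  linear_combination d 2 * hu

theorem exists_mul_eq_chart₀ (m : Matrix (Fin 3) (Fin 2) K) (hm : minors m 0 ≠ 0) :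
    ∃ g : SpecialLinearGroup (Fin 2) K,
      m * (g : Matrix (Fin 2) (Fin 2) K) = chart₀ (minors m 0)⁻¹ (minors m) := by
  have hu := mul_inv_cancel₀ hm
  generalize (minors m 0)⁻¹ = u at hu ⊢
  simp only [minors, Fin.isValue, cons_val_zero] at hu
  refine ⟨⟨!![m 2 1, -(m 1 1 * u); -m 2 0, m 1 0 * u], ?_⟩, ?_⟩
  · rw [det_fin_two_of]
    linear_combination hu
  · ext i j
    fin_cases i <;> fin_cases j <;> simp [chart₀, minors, mul_apply, Fin.sum_univ_two]
    all_goals first | ring1 | linear_combination hu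

theorem exists_mul_eq_chart₂ (m : Matrix (Fin 3) (Fin 2) K) (hm : minors m 2 ≠ 0) :
    ∃ g : SpecialLinearGroup (Fin 2) K,
      m * (g : Matrix (Fin 2) (Fin 2) K) = chart₂ (minors m 2)⁻¹ (minors m) := by
  have hu := mul_inv_cancel₀ hm
  generalize (minors m 2)⁻¹ = u at hu ⊢
  simp only [minors, Fin.isValue, cons_val] at hu
  refine ⟨⟨!![m 1 1, -(m 0 1 * u); -m 1 0, m 0 0 * u], ?_⟩, ?_⟩
  · rw [det_fin_two_of]
    linear_combination hu
  · ext i j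
    fin_cases i <;> fin_cases j <;> simp [chart₂, minors, mul_apply, Fin.sum_univ_two]
    all_goals first | ring1 | linear_combination hu

theorem minors_mvPolynomialX_eval (m : Matrix (Fin 3) (Fin 2) R) (k : Fin 3) :
    eval (fun ij => m ij.1 ij.2) (minors (mvPolynomialX (Fin 3) (Fin 2) R) k) = minors m k := by
  have h := congrFun (minors_map (eval fun ij => m ij.1 ij.2) (mvPolynomialX _ _ R)) k
  rwa [show (mvPolynomialX _ _ R).map (eval fun ij => m ij.1 ij.2) = m from
    mvPolynomialX_map_eval₂ _ m, eq_comm] at h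

theorem eval_bind₁_minors_mvPolynomialX (m : Matrix (Fin 3) (Fin 2) R)
    (P : MvPolynomial (Fin 3) R) :
    eval (fun ij => m ij.1 ij.2) (bind₁ (minors (mvPolynomialX (Fin 3) (Fin 2) R)) P) =
      eval (minors m) P :=
  (eval₂Hom_bind₁ _ _ _ _).trans (congrArg (eval · P) (funext (minors_mvPolynomialX_eval m)))

theorem minors_mvPolynomialX_ne_zero [Nontrivial R] (k : Fin 3) :
    minors (mvPolynomialX (Fin 3) (Fin 2) R) k ≠ 0 := fun h => by
  simpa [minors_mvPolynomialX_eval, minors_chart₀ (d := 1) (u := (1 : R)) (mul_one 1)] using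
    congrArg (eval fun ij => chart₀ (1 : R) 1 ij.1 ij.2) h

section Invariants

variable {f : Matrix (Fin 3) (Fin 2) K → K} {F : MvPolynomial (Fin 3 × Fin 2) K}

theorem exists_pow_minors_mul_eq_eval
    (hF : ∀ m, f m = eval (fun ij => m ij.1 ij.2) F)
    (hinv : ∀ (m : Matrix (Fin 3) (Fin 2) K) (g : SpecialLinearGroup (Fin 2) K),
      f (m * (g : Matrix (Fin 2) (Fin 2) K)) = f m)
    (i : Fin 3) (C : Matrix (Fin 3) (Fin 2) (Polynomial (MvPolynomial (Fin 3) K)))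
    (hC : ∀ m, minors m i ≠ 0 → ∃ g : SpecialLinearGroup (Fin 2) K,
      m * (g : Matrix (Fin 2) (Fin 2) K) =
        C.map (Polynomial.eval₂RingHom (eval (minors m)) (minors m i)⁻¹)) :
    ∃ (N : ℕ) (Q : MvPolynomial (Fin 3) K),
      ∀ m, minors m i ≠ 0 → minors m i ^ N * f m = eval (minors m) Q := by
  obtain ⟨N, Q, hQ⟩ := exists_pow_mul_eval_eval₂_inv_eq_eval F (fun ij => C ij.1 ij.2) i
  refine ⟨N, Q, fun m hm => ?_⟩
  obtain ⟨g, hg⟩ := hC m hm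
  rw [← hinv m g, hF, hg]
  exact hQ _ hm

theorem X_pow_dvd_of_pow_minors_mul_eq_eval [Infinite K] {j : Fin 3} (hj : j ≠ 0) {N₀ N : ℕ}
    {Q₀ Q : MvPolynomial (Fin 3) K}
    (h₀ : ∀ m, minors m 0 ≠ 0 → minors m 0 ^ N₀ * f m = eval (minors m) Q₀)
    (h : ∀ m, minors m j ≠ 0 → minors m j ^ N * f m = eval (minors m) Q) :
    X 0 ^ N₀ ∣ Q₀ := by
  have hglue : Q₀ * X j ^ N = Q * X 0 ^ N₀ :=
    eq_of_eval_eq_of_eval_ne_zero (mul_ne_zero (X_ne_zero 0) (X_ne_zero j)) fun d hd => by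
      obtain ⟨hd0, hdj⟩ : d 0 ≠ 0 ∧ d j ≠ 0 := by simpa using hd
      have hm := minors_chart₀ (mul_inv_cancel₀ hd0)
      have e₀ := h₀ _ (hm ▸ hd0)
      have e := h _ (hm ▸ hdj)
      rw [hm] at e₀ e
      simp only [eval_mul, eval_pow, eval_X, ← e₀, ← e]
      ring
  exact X_pow_dvd_of_X_pow_dvd_mul_X_pow hj.symm ⟨Q, hglue.trans (mul_comm _ _)⟩

theorem forall_eq_eval_minors_of_minors_ne_zero [Infinite K]
    (hF : ∀ m, f m = eval (fun ij => m ij.1 ij.2) F) {P : MvPolynomial (Fin 3) K} (i : Fin 3)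
    (h : ∀ m, minors m i ≠ 0 → f m = eval (minors m) P) (m : Matrix (Fin 3) (Fin 2) K) :
    f m = eval (minors m) P := by
  have hFP : F = bind₁ (minors (mvPolynomialX (Fin 3) (Fin 2) K)) P := by
    refine eq_of_eval_eq_of_eval_ne_zero (minors_mvPolynomialX_ne_zero i) fun x hx => ?_
    obtain ⟨m', rfl⟩ : ∃ m' : Matrix (Fin 3) (Fin 2) K, (fun ij => m' ij.1 ij.2) = x :=
      ⟨of fun a b => x (a, b), rfl⟩
    rw [minors_mvPolynomialX_eval] at hx
    rw [← hF, eval_bind₁_minors_mvPolynomialX, h m' hx]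
  rw [hF, hFP, eval_bind₁_minors_mvPolynomialX]

end Invariants

end Matrix

open Matrix in
/-- **First fundamental theorem of invariant theory for `SL₂` acting on `Hom(S, K)`**
(Lemma 5.3).  A polynomial function on the space of `3 × 2` complex matrices which is
invariant under right multiplication by `SL(2, ℂ)` is a polynomial in the three
`2 × 2` minors. -/
theorem sl2_invariant_polynomial_is_polynomial_in_minors
    (f : Matrix (Fin 3) (Fin 2) ℂ → ℂ)
    (hpoly : ∃ F : MvPolynomial (Fin 3 × Fin 2) ℂ,
      ∀ m : Matrix (Fin 3) (Fin 2) ℂ,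
        f m = MvPolynomial.eval (fun ij => m ij.1 ij.2) F)
    (hinv : ∀ (m : Matrix (Fin 3) (Fin 2) ℂ) (g : Matrix.SpecialLinearGroup (Fin 2) ℂ),
      f (m * (g : Matrix (Fin 2) (Fin 2) ℂ)) = f m) :
    ∃ P : MvPolynomial (Fin 3) ℂ, ∀ m : Matrix (Fin 3) (Fin 2) ℂ,
      f m = MvPolynomial.eval
        ![m 1 0 * m 2 1 - m 1 1 * m 2 0,
          m 0 0 * m 2 1 - m 0 1 * m 2 0,
          m 0 0 * m 1 1 - m 0 1 * m 1 0] P := by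
  obtain ⟨F, hF⟩ := hpoly
  obtain ⟨N₀, Q₀, hQ₀⟩ := exists_pow_minors_mul_eq_eval hF hinv 0
    (chart₀ Polynomial.X fun k => Polynomial.C (X k)) fun m hm => by
      rw [chart₀_map]
      simpa [Function.comp_def] using exists_mul_eq_chart₀ m hm
  obtain ⟨N₂, Q₂, hQ₂⟩ := exists_pow_minors_mul_eq_eval hF hinv 2
    (chart₂ Polynomial.X fun k => Polynomial.C (X k)) fun m hm => by
      rw [chart₂_map]
      simpa [Function.comp_def] using exists_mul_eq_chart₂ m hm
  obtain ⟨P, rfl⟩ := X_pow_dvd_of_pow_minors_mul_eq_eval (by decide) hQ₀ hQ₂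
  refine ⟨P, forall_eq_eval_minors_of_minors_ne_zero hF 0 fun m hm => ?_⟩
  have hP := hQ₀ m hm
  rw [eval_mul, eval_pow, eval_X] at hP
  exact mul_left_cancel₀ (pow_ne_zero _ hm) hP
end

section
/- Let V be a 7-dimensional complex vector space and ω an alternating bilinear form on V of rank 4, with kernel K = {v ∈ V : ω(v,w) = 0 for all w ∈ V} (so dim K = 3). Let L ⊆ V be an isotropic subspace with dim L = 5. Let x : ℂ² → V be a linear map such that ω(x e₁, x e₂) = 0 (where e₁,e₂ is the standard basis of ℂ²), the range of x is not contained in L, and dim(L + range(x)) ≤ 6. Set H = L + range(x) and H^⊥ = {v ∈ V : ω(v,h) = 0 for all h ∈ H}. Then dim H = 6 and the subspace { s ∈ ℂ² : x(s) ∈ H^⊥ } of ℂ² has dimension exactly 1. -/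
open Module

/-- The `ω`-orthogonal complement `H^⊥ = {v ∈ V : ω (v, h) = 0 for all h ∈ H}`
of a subspace `H` with respect to a bilinear form `ω`. -/
noncomputable def omegaPerp {V : Type*} [AddCommGroup V] [Module ℂ V]
    (ω : V →ₗ[ℂ] V →ₗ[ℂ] ℂ) (H : Submodule ℂ V) : Submodule ℂ V :=
  ⨅ h ∈ H, LinearMap.ker (ω.flip h)

private theorem skew' {V : Type*} [AddCommGroup V] [Module ℂ V]
    (ω : V →ₗ[ℂ] V →ₗ[ℂ] ℂ) (halt : ∀ v : V, ω v v = 0) (v w : V) :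
    ω v w = - ω w v := by
  have h := halt (v + w)
  simp only [map_add, LinearMap.add_apply, halt, zero_add, add_zero] at h
  linear_combination h

/-- An isotropic subspace has dimension at most 5. -/
private theorem iso_le_five {V : Type*} [AddCommGroup V] [Module ℂ V] [FiniteDimensional ℂ V]
    (hV : finrank ℂ V = 7)
    (ω : V →ₗ[ℂ] V →ₗ[ℂ] ℂ)
    (hK : finrank ℂ (LinearMap.ker ω) = 3)
    (M : Submodule ℂ V) (hMiso : ∀ v ∈ M, ∀ w ∈ M, ω v w = 0) :
    finrank ℂ M ≤ 5 := by
  set f : M →ₗ[ℂ] Module.Dual ℂ V := ω.comp M.subtype with hf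
  have hrange : LinearMap.range f ≤ M.dualAnnihilator := by
    rintro - ⟨m, rfl⟩
    rw [Submodule.mem_dualAnnihilator]
    intro w hw
    exact hMiso m m.2 w hw
  have h1 : finrank ℂ (LinearMap.range f) ≤ 7 - finrank ℂ M := by
    have := Submodule.finrank_mono (R := ℂ) hrange
    have e1 := (Subspace.quotEquivAnnihilator M).finrank_eq
    have e2 := Submodule.finrank_quotient_add_finrank M
    rw [hV] at e2
    omega
  have h2 : finrank ℂ (LinearMap.ker f) ≤ 3 := by
    rw [← hK]
    have hmap : (LinearMap.ker f).map M.subtype ≤ LinearMap.ker ω := by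
      rintro - ⟨m, hm, rfl⟩
      exact hm
    have := Submodule.finrank_mono (R := ℂ) hmap
    rwa [Submodule.finrank_map_subtype_eq] at this
  have h3 := LinearMap.finrank_range_add_finrank_ker f
  omega

/-- **Generic fibres of the resolution `pr₁ : Σ̃_p → Σ_p` are points** (Proposition 5.6).
`V` is 7-dimensional, `ω` is alternating of rank 4 (kernel `K` of dimension 3), `L` is a
5-dimensional isotropic subspace, and `x : ℂ² → V` is linear with `ω (x e₁, x e₂) = 0`,
`Im x ⊄ L` and `dim (L + Im x) ≤ 6`.  Then, with `H = L + Im x`, we have `dim H = 6` and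
`x⁻¹ (H^⊥)` is exactly 1-dimensional. -/
theorem generic_fibre_of_resolution
    {V : Type*} [AddCommGroup V] [Module ℂ V] [FiniteDimensional ℂ V]
    (hV : finrank ℂ V = 7)
    (ω : V →ₗ[ℂ] V →ₗ[ℂ] ℂ) (halt : ∀ v : V, ω v v = 0)
    (hK : finrank ℂ (LinearMap.ker ω) = 3)
    (L : Submodule ℂ V) (hLdim : finrank ℂ L = 5)
    (hLiso : ∀ v ∈ L, ∀ w ∈ L, ω v w = 0)
    (x : (Fin 2 → ℂ) →ₗ[ℂ] V)
    (hxW : ω (x (Pi.single 0 1)) (x (Pi.single 1 1)) = 0)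
    (hxL : ¬ LinearMap.range x ≤ L)
    (hdim : finrank ℂ (L ⊔ LinearMap.range x : Submodule ℂ V) ≤ 6) :
    finrank ℂ (L ⊔ LinearMap.range x : Submodule ℂ V) = 6 ∧
    finrank ℂ (Submodule.comap x (omegaPerp ω (L ⊔ LinearMap.range x))) = 1 := by
  set H : Submodule ℂ V := L ⊔ LinearMap.range x with hH
  have hskew := skew' ω halt
  -- the range of x is isotropic
  have hxx : ∀ s t : Fin 2 → ℂ, ω (x s) (x t) = 0 := by
    have hdecomp : ∀ s : Fin 2 → ℂ, s = s 0 • (Pi.single 0 1 : Fin 2 → ℂ) + s 1 • (Pi.single 1 1 : Fin 2 → ℂ) := by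
      intro s; funext i; fin_cases i <;> simp
    intro s t
    have h10 : ω (x (Pi.single 1 1)) (x (Pi.single 0 1)) = 0 := by
      rw [hskew, hxW]; ring
    rw [hdecomp s, hdecomp t]
    simp only [map_add, map_smul, LinearMap.add_apply, LinearMap.smul_apply, smul_eq_mul,
      halt, hxW, h10]
    ring
  -- part 1
  have hlt : L < H := by
    refine lt_of_le_of_ne le_sup_left ?_
    intro h
    exact hxL (by rw [h]; exact le_sup_right)
  have h6 : finrank ℂ H = 6 := by
    have := Submodule.finrank_lt_finrank_of_lt hlt
    omega
  -- membership in the orthogonal complement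
  have hmem : ∀ v : V, v ∈ omegaPerp ω H ↔ ∀ h ∈ H, ω v h = 0 := by
    intro v
    simp [omegaPerp, Submodule.mem_iInf, LinearMap.mem_ker, LinearMap.flip_apply]
  set P := Submodule.comap x (omegaPerp ω H) with hP
  -- lower bound: x⁻¹ L ⊆ P
  have hsub : Submodule.comap x L ≤ P := by
    intro s hs
    simp only [Submodule.mem_comap] at hs
    rw [hP, Submodule.mem_comap, hmem]
    intro h hh
    obtain ⟨l, hl, -, ⟨t, rfl⟩, rfl⟩ := Submodule.mem_sup.mp hh
    rw [map_add, hLiso _ hs _ hl, hxx, add_zero]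
  have h2d : finrank ℂ (Fin 2 → ℂ) = 2 := by simp
  -- x⁻¹ L has dimension 1
  have hker : Submodule.comap x L = LinearMap.ker (L.mkQ.comp x) := by
    ext s
    simp [LinearMap.mem_ker, Submodule.Quotient.mk_eq_zero]
  have hmapL : Submodule.map L.mkQ L = ⊥ := by
    rw [eq_bot_iff]
    rintro - ⟨l, hl, rfl⟩
    simpa [Submodule.mkQ_apply, Submodule.Quotient.mk_eq_zero] using hl
  have hrange_q : LinearMap.range (L.mkQ.comp x) = Submodule.map L.mkQ H := by
    rw [LinearMap.range_comp, hH, Submodule.map_sup, hmapL, bot_sup_eq]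
  have hmapH : finrank ℂ (Submodule.map L.mkQ H) = 1 := by
    have h3 := LinearMap.finrank_range_add_finrank_ker (L.mkQ.comp H.subtype)
    have hr : LinearMap.range (L.mkQ.comp H.subtype) = Submodule.map L.mkQ H := by
      rw [LinearMap.range_comp, Submodule.range_subtype]
    have hkk : LinearMap.ker (L.mkQ.comp H.subtype) = Submodule.comap H.subtype L := by
      ext s
      simp [LinearMap.mem_ker, Submodule.Quotient.mk_eq_zero]
    have hck : finrank ℂ (Submodule.comap H.subtype L) = 5 := by
      have hmc : Submodule.map H.subtype (Submodule.comap H.subtype L) = L := by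
        rw [Submodule.map_comap_subtype]
        exact inf_eq_right.mpr hlt.le
      have e := Submodule.finrank_map_subtype_eq H (Submodule.comap H.subtype L)
      rw [hmc] at e
      omega
    rw [hr, hkk, hck, h6] at h3
    omega
  have hcomapL : finrank ℂ (Submodule.comap x L) = 1 := by
    have h3 := LinearMap.finrank_range_add_finrank_ker (L.mkQ.comp x)
    rw [hrange_q, hmapH, h2d] at h3
    rw [hker]
    omega
  -- P is not everything
  have hPne : P ≠ ⊤ := by
    intro htop
    have hx' : ∀ s : Fin 2 → ℂ, ∀ h ∈ H, ω (x s) h = 0 := by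
      intro s
      have hsP : s ∈ P := htop ▸ Submodule.mem_top
      exact (hmem _).mp hsP
    have hHiso : ∀ v ∈ H, ∀ w ∈ H, ω v w = 0 := by
      intro v hv w hw
      obtain ⟨l, hl, -, ⟨t, rfl⟩, rfl⟩ := Submodule.mem_sup.mp hv
      rw [map_add, LinearMap.add_apply, hx' t w hw, add_zero]
      obtain ⟨l', hl', -, ⟨u, rfl⟩, rfl⟩ := Submodule.mem_sup.mp hw
      rw [map_add, hLiso _ hl _ hl', hskew l (x u),
        hx' u l (Submodule.mem_sup_left hl)]
      ring
    have := iso_le_five hV ω hK H hHiso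
    omega
  refine ⟨h6, ?_⟩
  have hub : finrank ℂ P ≤ 2 := by have := Submodule.finrank_le P; omega
  have hlb : 1 ≤ finrank ℂ P := hcomapL ▸ Submodule.finrank_mono hsub
  rcases Nat.lt_or_ge (finrank ℂ P) 2 with h | h
  · omega
  · exact absurd (Submodule.eq_top_of_finrank_eq (by omega)) hPne
end
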